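/- arXiv:2002.06915 — 6 statements merged into one kernel-verified Lean document; each statement's English description precedes it below -/
import Mathlib

section
/- Let X be a real Hilbert space and E : X → ℝ a continuously Fréchet differentiable functional satisfying the Palais–Smale condition. Assume: (a) E(0) = 0; (b) there exist constants r, α > 0 such that E(v) ≥ α for every v ∈ X with ‖v‖ = r; (c) there exists h ∈ X with ‖h‖ > r and E(h) ≤ 0. Let Γ = {g ∈ C⁰([0,1]; X) : g(0) = 0, g(1) = h} and c = inf_{g∈Γ} max_{t∈[0,1]} E(g(t)). Then c ≥ α and c is a critical value of E, i.e. there exists u ∈ X with E'(u) = 0 in X* and E(u) = c. -/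
/-!
Every path from `0` to `h` crosses the sphere of radius `r`, so `c ≥ α > max (E 0) (E h)`.
Ekeland's variational principle, applied to the lower semicontinuous functional
`g ↦ max_t E (g t)` on the complete metric space of paths from `0` to `h`, gives paths `G` with
maximum below `c + ε` that no path at distance `d` improves by more than `ε d`. If `‖E'‖ ≥ δ` on
the strip `|E - c| ≤ ε₀`, pushing the high part of `G` a step `s` along the normalized negative
gradient lowers its maximum by `s δ / 2`, which is impossible once `ε < δ / 2`. Hence there are
points with `E u → c` and `E' u → 0`, and the Palais–Smale condition turns them into a
critical point at level `c`.
-/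

open Filter Set Metric Topology unitInterval

section Ekeland

variable {Y : Type*} [MetricSpace Y] {F : Y → ℝ} {ε : ℝ}

def ekelandSet (F : Y → ℝ) (ε : ℝ) (v : Y) : Set Y := {w | F w + ε * dist v w ≤ F v}

lemma self_mem_ekelandSet (v : Y) : v ∈ ekelandSet F ε v := by
  simp [ekelandSet]

lemma ekelandSet_subset (hε : 0 ≤ ε) {v w : Y} (hw : w ∈ ekelandSet F ε v) :
    ekelandSet F ε w ⊆ ekelandSet F ε v := fun x hx => by
  have := mul_le_mul_of_nonneg_left (dist_triangle v w x) hε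
  simp only [ekelandSet, mem_ofPred_eq] at hw hx ⊢
  linarith

lemma isClosed_ekelandSet (hF : LowerSemicontinuous F) (v : Y) :
    IsClosed (ekelandSet F ε v) :=
  (hF.add (continuous_const.mul (continuous_const.dist continuous_id)).lowerSemicontinuous)
    |>.isClosed_preimage (F v)

lemma exists_mem_ekelandSet_subset_closedBall (hF : BddBelow (range F)) (hε : 0 < ε)
    {η : ℝ} (hη : 0 < η) (v : Y) :
    ∃ v' ∈ ekelandSet F ε v, ekelandSet F ε v' ⊆ closedBall v' (η / ε) := by
  have hne : (F '' ekelandSet F ε v).Nonempty := ⟨F v, v, self_mem_ekelandSet v, rfl⟩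
  have hbdd : BddBelow (F '' ekelandSet F ε v) := hF.mono (image_subset_range _ _)
  obtain ⟨_, ⟨v', hv', rfl⟩, hv'η⟩ := exists_lt_of_csInf_lt hne (lt_add_of_pos_right _ hη)
  refine ⟨v', hv', fun w hw => ?_⟩
  have hinf : sInf (F '' ekelandSet F ε v) ≤ F w :=
    csInf_le hbdd (mem_image_of_mem F (ekelandSet_subset hε.le hv' hw))
  rw [mem_closedBall, dist_comm, le_div_iff₀ hε]
  simp only [ekelandSet, mem_ofPred_eq] at hw
  linarith

/-- Ekeland's variational principle. -/
theorem LowerSemicontinuous.exists_le_forall_le_add_mul_dist [CompleteSpace Y]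
    (hF : LowerSemicontinuous F) (hbdd : BddBelow (range F)) (hε : 0 < ε) (v₀ : Y) :
    ∃ v, F v ≤ F v₀ ∧ ∀ w, F v ≤ F w + ε * dist v w := by
  choose next hnext hsmall using fun v (n : ℕ) =>
    exists_mem_ekelandSet_subset_closedBall hbdd hε Nat.one_div_pos_of_nat v (η := 1 / (n + 1))
  let u : ℕ → Y := fun n => Nat.rec v₀ (fun n v => next v n) n
  let s : ℕ → Set Y := fun n => ekelandSet F ε (u (n + 1))
  have hanti : Antitone s :=
    antitone_nat_of_succ_le fun n => ekelandSet_subset hε.le (hnext (u (n + 1)) (n + 1))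
  have hbounded : ∀ n, Bornology.IsBounded (s n) := fun n =>
    isBounded_closedBall.subset (hsmall (u n) n)
  have hdiam : Tendsto (fun n => diam (s n)) atTop (𝓝 0) := by
    have hr : Tendsto (fun n : ℕ => 2 * (1 / (n + 1) / ε)) atTop (𝓝 0) := by
      simpa using (tendsto_one_div_add_atTop_nhds_zero_nat.div_const ε).const_mul 2
    refine squeeze_zero (fun n => diam_nonneg) (fun n => ?_) hr
    exact (diam_mono (hsmall (u n) n) isBounded_closedBall).trans
      (diam_closedBall (by positivity))
  obtain ⟨v, hv⟩ := nonempty_iInter_of_nonempty_biInter (fun n => isClosed_ekelandSet hF _)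
    hbounded (fun N => ⟨u (N + 1), mem_iInter₂.2 fun n hn => hanti hn (self_mem_ekelandSet _)⟩)
    hdiam
  rw [mem_iInter] at hv
  refine ⟨v, ?_, fun w => ?_⟩
  · have hv₀ : v ∈ ekelandSet F ε v₀ := ekelandSet_subset hε.le (hnext v₀ 0) (hv 0)
    simp only [ekelandSet, mem_ofPred_eq] at hv₀
    linarith [mul_nonneg hε.le (dist_nonneg (x := v₀) (y := v))]
  by_cases hw : w ∈ ekelandSet F ε v
  · have hdist : dist v w ≤ 0 := ge_of_tendsto' hdiam fun n =>
      dist_le_diam_of_mem (hbounded n) (hv n) (ekelandSet_subset hε.le (hv n) hw)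
    simp [dist_le_zero.1 hdist]
  · simp only [ekelandSet, mem_ofPred_eq, not_le] at hw
    exact hw.le

end Ekeland

lemma IsCompact.exists_pos_forall_dist_lt {α β : Type*} [PseudoMetricSpace α]
    [PseudoMetricSpace β] {K : Set α} (hK : IsCompact K) {f : α → β} (hf : Continuous f)
    {κ : ℝ} (hκ : 0 < κ) : ∃ r > 0, ∀ x ∈ K, ∀ y, dist x y < r → dist (f x) (f y) < κ := by
  obtain ⟨r, hr, h⟩ := Metric.mem_uniformity_dist.1 <|
    hK.uniformContinuousAt_of_continuousAt f (fun x _ => hf.continuousAt) (dist_mem_uniformity hκ)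
  exact ⟨r, hr, fun x hx y hxy => h hxy hx⟩

section Paths

variable {X : Type*} [TopologicalSpace X] {E : X → ℝ}

-- `Path a b` carries no metric, so paths are continuous maps on `I` with fixed endpoints.
noncomputable def pathMax (E : X → ℝ) (g : C(I, X)) : ℝ := ⨆ t, E (g t)

def pathsBetween (a b : X) : Set C(I, X) := {g | g 0 = a ∧ g 1 = b}

lemma le_pathMax (hE : Continuous E) (g : C(I, X)) (t : I) : E (g t) ≤ pathMax E g :=
  le_ciSup (isCompact_range (hE.comp g.continuous)).bddAbove t

lemma pathMax_le {g : C(I, X)} {b : ℝ} (h : ∀ t, E (g t) ≤ b) : pathMax E g ≤ b :=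
  ciSup_le h

lemma lowerSemicontinuous_pathMax (hE : Continuous E) : LowerSemicontinuous (pathMax E) :=
  lowerSemicontinuous_ciSup (fun g => (isCompact_range (hE.comp g.continuous)).bddAbove)
    fun t => (hE.comp (continuous_eval_const t)).lowerSemicontinuous

lemma isClosed_pathsBetween [T1Space X] (a b : X) : IsClosed (pathsBetween a b) :=
  (isClosed_singleton.preimage (continuous_eval_const 0)).inter
    (isClosed_singleton.preimage (continuous_eval_const 1))

lemma nonempty_pathsBetween [PathConnectedSpace X] (a b : X) : (pathsBetween a b).Nonempty :=
  ⟨(PathConnectedSpace.somePath a b).toContinuousMap, by simp [pathsBetween]⟩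

lemma setOf_sSup_image_eq_image_pathMax (E : X → ℝ) (a b : X) :
    {m : ℝ | ∃ g : ℝ → X, ContinuousOn g (Icc 0 1) ∧ g 0 = a ∧ g 1 = b ∧
      m = sSup (E '' (g '' Icc 0 1))} = pathMax E '' pathsBetween a b := by
  ext m
  constructor
  · rintro ⟨g, hg, rfl, rfl, rfl⟩
    refine ⟨⟨(Icc 0 1).domRestrict g, hg.domRestrict⟩, ⟨rfl, rfl⟩, ?_⟩
    rw [image_image, image_eq_range]
    rfl
  · rintro ⟨g, ⟨rfl, rfl⟩, rfl⟩
    refine ⟨IccExtend zero_le_one g, g.continuous.Icc_extend'.continuousOn,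
      IccExtend_left _ _, IccExtend_right _ _, ?_⟩
    have : IccExtend zero_le_one g '' Icc 0 1 = range g := by
      rw [← IccExtend_range zero_le_one g]
      exact (image_subset_range _ _).antisymm <| range_subset_iff.2 fun x =>
        ⟨projIcc 0 1 zero_le_one x, (projIcc _ _ _ _).2, by simp [IccExtend]⟩
    rw [this, ← range_comp]
    rfl

end Paths

lemma le_pathMax_of_norm_le_of_le_norm {X : Type*} [NormedAddCommGroup X] {E : X → ℝ}
    (hE : Continuous E) {r α : ℝ} (hsphere : ∀ v : X, ‖v‖ = r → α ≤ E v) {g : C(I, X)}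
    (h0 : ‖g 0‖ ≤ r) (h1 : r ≤ ‖g 1‖) : α ≤ pathMax E g := by
  obtain ⟨t, ht⟩ := intermediate_value_univ 0 1 (continuous_norm.comp g.continuous) ⟨h0, h1⟩
  exact (hsphere _ ht).trans (le_pathMax hE g t)

section NormedSpace

variable {X : Type*} [NormedAddCommGroup X] [NormedSpace ℝ X] {E : X → ℝ} {E' : X → X →L[ℝ] ℝ}

def SatisfiesPalaisSmale (E : X → ℝ) (E' : X → X →L[ℝ] ℝ) : Prop :=
  ∀ u : ℕ → X, (∃ M : ℝ, ∀ k, |E (u k)| ≤ M) → Tendsto (fun k => ‖E' (u k)‖) atTop (𝓝 0) →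
    ∃ φ : ℕ → ℕ, StrictMono φ ∧ ∃ x : X, Tendsto (u ∘ φ) atTop (𝓝 x)

theorem SatisfiesPalaisSmale.exists_critical_of_forall_exists (hPS : SatisfiesPalaisSmale E E')
    (hE : Continuous E) (hE' : Continuous E') {c : ℝ}
    (h : ∀ ε > 0, ∃ u, |E u - c| ≤ ε ∧ ‖E' u‖ < ε) : ∃ x, E' x = 0 ∧ E x = c := by
  choose u hu using fun k : ℕ => h (1 / (k + 1)) Nat.one_div_pos_of_nat
  have hEu : Tendsto (fun k => E (u k)) atTop (𝓝 c) := tendsto_iff_norm_sub_tendsto_zero.2 <|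
    squeeze_zero (fun _ => norm_nonneg _) (fun k => (hu k).1)
      tendsto_one_div_add_atTop_nhds_zero_nat
  have hE'u : Tendsto (fun k => ‖E' (u k)‖) atTop (𝓝 0) :=
    squeeze_zero (fun _ => norm_nonneg _) (fun k => (hu k).2.le)
      tendsto_one_div_add_atTop_nhds_zero_nat
  obtain ⟨M, hM⟩ := hEu.abs.bddAbove_range
  obtain ⟨φ, hφ, x, hx⟩ := hPS u ⟨M, fun k => hM ⟨k, rfl⟩⟩ hE'u
  refine ⟨x, norm_eq_zero.1 ?_, ?_⟩
  · exact tendsto_nhds_unique ((hE'.norm.tendsto x).comp hx) (hE'u.comp hφ.tendsto_atTop)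
  · exact tendsto_nhds_unique ((hE.tendsto x).comp hx) (hEu.comp hφ.tendsto_atTop)

lemma image_sub_smul_le (hE : ∀ x, HasFDerivAt E (E' x) x) {u w : X} {r κ s : ℝ}
    (hclose : ∀ v ∈ closedBall u r, ‖E' v - E' u‖ ≤ κ) (hs : 0 ≤ s) (hsw : s * ‖w‖ ≤ r) :
    E (u - s • w) ≤ E u - s * (E' u w - κ * ‖w‖) := by
  have hsw' : ‖-(s • w)‖ = s * ‖w‖ := by rw [norm_neg, norm_smul, Real.norm_of_nonneg hs]
  have hmem : u - s • w ∈ closedBall u r := by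
    rwa [mem_closedBall, dist_eq_norm, sub_sub_cancel_left, hsw']
  have h := (convex_closedBall u r).norm_image_sub_le_of_norm_hasFDerivWithin_le'
    (fun v _ => (hE v).hasFDerivWithinAt) hclose
    (mem_closedBall_self ((mul_nonneg hs (norm_nonneg w)).trans hsw)) hmem
  rw [sub_sub_cancel_left, hsw', map_neg, map_smul, smul_eq_mul] at h
  have := (Real.le_norm_self _).trans h
  linarith

lemma IsCompact.exists_pos_forall_image_sub_smul_le {K : Set X} (hK : IsCompact K)
    (hE : ∀ x, HasFDerivAt E (E' x) x) (hE' : Continuous E') {κ : ℝ} (hκ : 0 < κ) :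
    ∃ r > 0, ∀ u ∈ K, ∀ {w : X} {s : ℝ}, 0 ≤ s → s * ‖w‖ ≤ r →
      E (u - s • w) ≤ E u - s * (E' u w - κ * ‖w‖) := by
  obtain ⟨r, hr, hclose⟩ := hK.exists_pos_forall_dist_lt hE' hκ
  refine ⟨r / 2, half_pos hr, fun u hu w s hs hsw => image_sub_smul_le hE (fun v hv => ?_) hs hsw⟩
  rw [← dist_eq_norm, dist_comm]
  exact (hclose u hu v (by rw [dist_comm]; linarith [mem_closedBall.1 hv])).le

end NormedSpace

section InnerProductSpace

variable {X : Type*} [NormedAddCommGroup X] [InnerProductSpace ℝ X] [CompleteSpace X]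
  {E : X → ℝ} {E' : X → X →L[ℝ] ℝ}

lemma exists_continuous_descent_direction (hE' : Continuous E') {δ : ℝ} (hδ : 0 < δ) :
    ∃ V : X → X, Continuous V ∧ (∀ u, ‖V u‖ ≤ 1) ∧ ∀ u, δ ≤ ‖E' u‖ → δ ≤ E' u (V u) := by
  let grad : X → X := fun u => (InnerProductSpace.toDual ℝ X).symm (E' u)
  have hgrad : ∀ u, ‖grad u‖ = ‖E' u‖ := fun u =>
    (InnerProductSpace.toDual ℝ X).symm.norm_map (E' u)
  have hpos : ∀ u, 0 < max ‖E' u‖ δ := fun u => lt_max_of_lt_right hδ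
  refine ⟨fun u => (max ‖E' u‖ δ)⁻¹ • grad u, ?_, fun u => ?_, fun u hu => ?_⟩
  · exact ((hE'.norm.max continuous_const).inv₀ fun u => (hpos u).ne').smul
      ((InnerProductSpace.toDual ℝ X).symm.continuous.comp hE')
  · rw [norm_smul, norm_inv, Real.norm_of_nonneg (hpos u).le, hgrad, inv_mul_le_one₀ (hpos u)]
    exact le_max_left _ _
  · have hgradE : E' u (grad u) = ‖E' u‖ ^ 2 := by
      rw [← InnerProductSpace.toDual_symm_apply, real_inner_self_eq_norm_sq, hgrad]
    rw [map_smul, hgradE, max_eq_left hu, smul_eq_mul, sq, inv_mul_cancel_left₀]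
    · exact hu
    · exact (hδ.trans_le hu).ne'

lemma exists_path_deformation_pathMax_le (hE : ∀ x, HasFDerivAt E (E' x) x)
    (hE' : Continuous E') (G : C(I, X)) {ρ δ : ℝ} (hρ : 0 < ρ) (hδ : 0 < δ)
    (h0 : E (G 0) ≤ pathMax E G - ρ) (h1 : E (G 1) ≤ pathMax E G - ρ)
    (hstrip : ∀ t, pathMax E G - ρ < E (G t) → δ ≤ ‖E' (G t)‖) :
    ∃ s > 0, ∃ G' : C(I, X), G' 0 = G 0 ∧ G' 1 = G 1 ∧ dist G' G ≤ s ∧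
      pathMax E G' ≤ pathMax E G - s * δ / 2 := by
  set M := pathMax E G
  have hEc : Continuous E := continuous_iff_continuousAt.2 fun x => (hE x).continuousAt
  obtain ⟨χ, hχ0, hχ1, hχI⟩ := exists_continuous_zero_one_of_isClosed isClosed_Iic isClosed_Ici
    (Iic_disjoint_Ici.2 (by linarith : ¬ M - ρ / 2 ≤ M - ρ))
  obtain ⟨V, hVc, hV1, hVδ⟩ := exists_continuous_descent_direction hE' hδ
  let W : C(I, X) := ⟨fun t => χ (E (G t)) • V (G t), by fun_prop⟩
  have hW : ∀ t, ‖W t‖ ≤ χ (E (G t)) := fun t => by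
    simpa [W, norm_smul, abs_of_nonneg (hχI _).1] using
      mul_le_of_le_one_right (hχI _).1 (hV1 (G t))
  have hEW : ∀ t, χ (E (G t)) * δ ≤ E' (G t) (W t) := fun t => by
    rcases le_or_gt (E (G t)) (M - ρ) with hlow | hhigh
    · simp [W, hχ0 hlow]
    · simpa [W] using mul_le_mul_of_nonneg_left (hVδ _ (hstrip t hhigh)) (hχI _).1
  obtain ⟨r, hr, hstep⟩ :=
    (isCompact_range G.continuous).exists_pos_forall_image_sub_smul_le hE hE' (half_pos hδ)
  set s := min r (ρ / δ)
  have hs : 0 < s := by positivity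
  have hsδ : s * δ ≤ ρ := (le_div_iff₀ hδ).1 (min_le_right _ _)
  have hdecrease : ∀ t, E (G t - s • W t) ≤ E (G t) - s * (χ (E (G t)) * δ / 2) := fun t => by
    have hWs : s * ‖W t‖ ≤ r :=
      (mul_le_of_le_one_right hs.le ((hW t).trans (hχI _).2)).trans (min_le_left _ _)
    have := hstep _ (mem_range_self t) hs.le hWs
    linarith [mul_le_mul_of_nonneg_left (hEW t) hs.le, mul_le_mul_of_nonneg_left (hW t)
      (by positivity : 0 ≤ s * (δ / 2))]
  refine ⟨s, hs, G - s • W, ?_, ?_, ?_, pathMax_le fun t => ?_⟩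
  · simp [W, hχ0 h0]
  · simp [W, hχ0 h1]
  · refine (ContinuousMap.dist_le hs.le).2 fun t => ?_
    simpa [dist_eq_norm, norm_smul, abs_of_pos hs] using
      mul_le_of_le_one_right hs.le ((hW t).trans (hχI _).2)
  · have hmax := le_pathMax hEc G t
    have := hdecrease t
    simp only [ContinuousMap.sub_apply, ContinuousMap.smul_apply]
    rcases le_or_gt (M - ρ / 2) (E (G t)) with hhigh | hlow
    · rw [hχ1 hhigh, Pi.one_apply] at this
      linarith
    · have hχ := (hχI (E (G t))).1
      have : 0 ≤ s * (χ (E (G t)) * δ / 2) := by positivity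
      linarith

theorem exists_almost_critical_of_isGLB_pathMax (hE : ∀ x, HasFDerivAt E (E' x) x)
    (hE' : Continuous E') {a b : X} {c : ℝ} (hc : IsGLB (pathMax E '' pathsBetween a b) c)
    (ha : E a < c) (hb : E b < c) {ε₀ δ : ℝ} (hε₀ : 0 < ε₀) (hδ : 0 < δ) :
    ∃ u, |E u - c| ≤ ε₀ ∧ ‖E' u‖ < δ := by
  by_contra! hstrip
  have hEc : Continuous E := continuous_iff_continuousAt.2 fun x => (hE x).continuousAt
  have : CompleteSpace (pathsBetween a b) := (isClosed_pathsBetween a b).completeSpace_coe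
  have hcF : ∀ g : pathsBetween a b, c ≤ pathMax E g := fun g => hc.1 ⟨g, g.2, rfl⟩
  set ε := min ε₀ (δ / 4)
  have hε : 0 < ε := by positivity
  have hεε₀ : ε ≤ ε₀ := min_le_left _ _
  have hεδ : ε ≤ δ / 4 := min_le_right _ _
  obtain ⟨_, ⟨g₀, hg₀, rfl⟩, -, hg₀c⟩ := hc.exists_between (lt_add_of_pos_right c hε)
  obtain ⟨G, hG₀, hGmin⟩ := ((lowerSemicontinuous_pathMax hEc).comp continuous_subtype_val)
    |>.exists_le_forall_le_add_mul_dist ⟨c, forall_mem_range.2 hcF⟩ hε ⟨g₀, hg₀⟩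
  set ρ := min (c - max (E a) (E b)) ε₀
  have hρ : 0 < ρ := lt_min (sub_pos.2 (max_lt ha hb)) hε₀
  have hρa : ρ ≤ c - E a := (min_le_left _ _).trans (by linarith [le_max_left (E a) (E b)])
  have hρb : ρ ≤ c - E b := (min_le_left _ _).trans (by linarith [le_max_right (E a) (E b)])
  have hρε₀ : ρ ≤ ε₀ := min_le_right _ _
  have hGc := hcF G
  have hGε : pathMax E G < c + ε := hG₀.trans_lt hg₀c
  obtain ⟨s, hs, G', hG'0, hG'1, hdist, hG'max⟩ :=
    exists_path_deformation_pathMax_le hE hE' G hρ hδ (by rw [G.2.1]; linarith)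
      (by rw [G.2.2]; linarith) fun t ht =>
        hstrip _ (abs_le.2 ⟨by linarith, by linarith [le_pathMax hEc G t]⟩)
  have hG' : G' ∈ pathsBetween a b := ⟨hG'0.trans G.2.1, hG'1.trans G.2.2⟩
  have hEkeland : pathMax E G ≤ pathMax E G' + ε * dist G' G := by
    simpa [Subtype.dist_eq, dist_comm] using hGmin ⟨G', hG'⟩
  linarith [mul_le_mul_of_nonneg_left hdist hε.le, mul_le_mul_of_nonneg_right hεδ hs.le,
    mul_pos hs hδ]

end InnerProductSpace

/-- **Mountain pass theorem.** -/
theorem mountain_pass_theorem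
    {X : Type*} [NormedAddCommGroup X] [InnerProductSpace ℝ X] [CompleteSpace X]
    (E : X → ℝ) (E' : X → X →L[ℝ] ℝ)
    (hE : ∀ x, HasFDerivAt E (E' x) x) (hE' : Continuous E')
    (PS : ∀ u : ℕ → X, (∃ M : ℝ, ∀ k, |E (u k)| ≤ M) →
      Tendsto (fun k => ‖E' (u k)‖) atTop (nhds 0) →
      ∃ φ : ℕ → ℕ, StrictMono φ ∧ ∃ x : X, Tendsto (u ∘ φ) atTop (nhds x))
    (hE0 : E 0 = 0)
    (r α : ℝ) (hr : 0 < r) (hα : 0 < α)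
    (hsphere : ∀ v : X, ‖v‖ = r → α ≤ E v)
    (h : X) (hh : r < ‖h‖) (hEh : E h ≤ 0) :
    ∀ c : ℝ,
      c = sInf {m : ℝ | ∃ g : ℝ → X, ContinuousOn g (Set.Icc 0 1) ∧
            g 0 = 0 ∧ g 1 = h ∧ m = sSup (E '' (g '' Set.Icc 0 1))} →
      α ≤ c ∧ ∃ u : X, E' u = 0 ∧ E u = c := by
  intro c hc
  rw [setOf_sSup_image_eq_image_pathMax] at hc
  have hEc : Continuous E := continuous_iff_continuousAt.2 fun x => (hE x).continuousAt
  have hα_le : α ∈ lowerBounds (pathMax E '' pathsBetween 0 h) := by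
    rintro _ ⟨g, ⟨hg0, hg1⟩, rfl⟩
    exact le_pathMax_of_norm_le_of_le_norm hEc hsphere (by simp [hg0, hr.le]) (hg1 ▸ hh.le)
  have hglb : IsGLB (pathMax E '' pathsBetween 0 h) c :=
    hc ▸ isGLB_csInf ((nonempty_pathsBetween 0 h).image _) ⟨α, hα_le⟩
  have hαc : α ≤ c := hglb.2 hα_le
  refine ⟨hαc, SatisfiesPalaisSmale.exists_critical_of_forall_exists PS hEc hE' fun ε hε => ?_⟩
  exact exists_almost_critical_of_isGLB_pathMax hE hE' hglb (by linarith) (by linarith) hε hε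
end

section
/- Let L ⊆ X be a closed subspace and suppose E has a local peak selection p at some point x₀ ∈ S_{L⊥} with respect to L such that: (a) p is continuous at x₀; (b) inf_{u∈L} ‖p(x₀) − u‖ ≥ α for some constant α > 0; (c) x₀ is a local minimum point of the map v ↦ E(p(v)) on S_{L⊥}. Then p(x₀) is a critical point of E, i.e. E'(p(x₀)) = 0 in X*. -/
open scoped RealInnerProductSpace

/-- The closed half space `L_v = L + {t v : t ≥ 0}`. -/
def halfSpace {X : Type*} [NormedAddCommGroup X] [InnerProductSpace ℝ X]
    (L : Submodule ℝ X) (v : X) : Set X :=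
  {w | ∃ u ∈ L, ∃ t : ℝ, 0 ≤ t ∧ w = u + t • v}

/-- `w₀` is a local maximum of `E` in the half space `L_v`. -/
def IsLocalMaxIn {X : Type*} [NormedAddCommGroup X] [InnerProductSpace ℝ X]
    (E : X → ℝ) (L : Submodule ℝ X) (v w₀ : X) : Prop :=
  w₀ ∈ halfSpace L v ∧
    ∃ δ > (0 : ℝ), ∀ w ∈ halfSpace L v, ‖w - w₀‖ < δ → E w ≤ E w₀

/-!
Let `D = E'(p x₀)`. Moving `p x₀` inside the half space `L_{x₀}` shows `D ≤ 0` on `L`. For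
`w ∈ Lᗮ` and small `s < 0`, put `v = (x₀ + s w) / ‖x₀ + s w‖`. Writing `p v = u + t v` with
`u ∈ L`, `t > 0` (close to `⟪p x₀, x₀⟫ ≥ α`), the point `b = p v - σ w`, `σ = t s / ‖x₀ + s w‖ < 0`,
lies in `L_{x₀}` near `p x₀`. If `D w > 0`, strict differentiability of `E` at `p x₀` gives
`E (p v) = E (b + σ w) < E b ≤ E (p x₀) ≤ E (p v)`, a contradiction. So `D ≤ 0` on `L` and on
`Lᗮ`, hence `D = 0`.
-/

open Filter Topology Metric

section NormedSpace

variable {X : Type*} [NormedAddCommGroup X] [NormedSpace ℝ X]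

theorem tendsto_inv_norm_smul_add_smul_nhdsWithin {K : Submodule ℝ X} {x w : X} (hx : x ∈ K)
    (hx1 : ‖x‖ = 1) (hw : w ∈ K) :
    Tendsto (fun s : ℝ => ‖x + s • w‖⁻¹ • (x + s • w)) (𝓝 0)
      (𝓝[(K : Set X) ∩ sphere 0 1] x) := by
  have hcont : Continuous fun s : ℝ => x + s • w := by fun_prop
  have hne : ∀ᶠ s : ℝ in 𝓝 0, x + s • w ≠ 0 :=
    hcont.continuousAt.eventually_ne (by simp [← norm_ne_zero_iff, hx1])
  refine tendsto_nhdsWithin_iff.2 ⟨?_, hne.mono fun s hs => ⟨?_, ?_⟩⟩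
  · have : ContinuousAt (fun s : ℝ => ‖x + s • w‖⁻¹ • (x + s • w)) 0 :=
      (hcont.norm.continuousAt.inv₀ (by simp [hx1])).smul hcont.continuousAt
    convert this.tendsto using 2
    simp [hx1]
  · exact K.smul_mem _ (K.add_mem hx (K.smul_mem s hw))
  · rw [mem_sphere_zero_iff_norm, norm_smul, norm_inv, norm_norm,
      inv_mul_cancel₀ (norm_ne_zero_iff.2 hs)]

theorem HasStrictFDerivAt.eventually_add_smul_lt {E : X → ℝ} {D : X →L[ℝ] ℝ} {x w : X}
    (hD : HasStrictFDerivAt E D x) (hw : 0 < D w) :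
    ∀ᶠ q : X × ℝ in 𝓝 x ×ˢ 𝓝[<] 0, E (q.1 + q.2 • w) < E q.1 := by
  have hw0 : 0 < ‖w‖ := norm_pos_iff.2 fun h => by simp [h] at hw
  set c := D w / (2 * ‖w‖)
  have hlim :
      Tendsto (fun q : X × ℝ => (q.1 + q.2 • w, q.1)) (𝓝 x ×ˢ 𝓝[<] 0) (𝓝 (x, x)) := by
    have hcont : Continuous fun q : X × ℝ => (q.1 + q.2 • w, q.1) := by fun_prop
    refine (hcont.tendsto' (x, 0) (x, x) (by simp)).mono_left ?_
    rw [nhds_prod_eq]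
    exact prod_mono le_rfl nhdsWithin_le_nhds
  filter_upwards [hlim.eventually ((hasStrictFDerivAt_iff_isLittleO.1 hD).def
    (by positivity : 0 < c)), prod_mem_prod univ_mem self_mem_nhdsWithin]
    with ⟨b, σ⟩ hb ⟨_, hσ⟩
  have hσ : σ < 0 := hσ
  have hc : c * (-σ * ‖w‖) = -σ * D w / 2 := by
    simp only [c]; field_simp
  simp only [add_sub_cancel_left, map_smul, smul_eq_mul, norm_smul, Real.norm_eq_abs] at hb ⊢
  rw [_root_.abs_of_neg hσ, hc] at hb
  linarith [(abs_le.1 hb).2, mul_pos (neg_pos.2 hσ) hw]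

end NormedSpace

section InnerProductSpace

variable {X : Type*} [NormedAddCommGroup X] [InnerProductSpace ℝ X]

section HalfSpace

variable {L : Submodule ℝ X} {v w : X}

theorem mem_halfSpace_iff (hv : v ∈ Lᗮ) (hv1 : ‖v‖ = 1) :
    w ∈ halfSpace L v ↔ w - ⟪w, v⟫ • v ∈ L ∧ 0 ≤ ⟪w, v⟫ := by
  constructor
  · rintro ⟨u, hu, t, ht, rfl⟩
    have hinner : ⟪u + t • v, v⟫ = t := by
      rw [inner_add_left, real_inner_smul_left, real_inner_self_eq_norm_sq, hv1,
        (L.mem_orthogonal v).1 hv u hu]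
      ring
    rw [hinner, add_sub_cancel_right]
    exact ⟨hu, ht⟩
  · rintro ⟨hmem, hnonneg⟩
    exact ⟨_, hmem, _, hnonneg, (sub_add_cancel _ _).symm⟩

theorem IsLocalMaxIn.isLocalMaxOn {E : X → ℝ} (h : IsLocalMaxIn E L v w) :
    IsLocalMaxOn E (halfSpace L v) w := by
  obtain ⟨-, δ, hδ, hmax⟩ := h
  filter_upwards [inter_mem_nhdsWithin _ (ball_mem_nhds w hδ)] with z ⟨hz, hzw⟩
  exact hmax z hz (mem_ball_iff_norm.1 hzw)

theorem mem_posTangentConeAt_halfSpace (hw : w ∈ halfSpace L v) {u : X} (hu : u ∈ L) :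
    u ∈ posTangentConeAt (halfSpace L v) w := by
  refine mem_posTangentConeAt_of_segment_subset ?_
  rw [segment_eq_image']
  rintro _ ⟨θ, -, rfl⟩
  obtain ⟨u₀, hu₀, t, ht, rfl⟩ := hw
  exact ⟨u₀ + θ • u, L.add_mem hu₀ (L.smul_mem θ hu), t, ht, by
    simp only [add_sub_cancel_left]; abel⟩

end HalfSpace

theorem ContinuousLinearMap.eq_zero_of_nonpos_of_nonpos_orthogonal {K : Submodule ℝ X}
    [K.HasOrthogonalProjection] {f : X →L[ℝ] ℝ} (hK : ∀ u ∈ K, f u ≤ 0)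
    (hKperp : ∀ w ∈ Kᗮ, f w ≤ 0) : f = 0 := by
  have hnonpos : ∀ x, f x ≤ 0 := fun x => by
    obtain ⟨u, hu, hxu⟩ := Submodule.HasOrthogonalProjection.exists_orthogonal (K := K) x
    simpa using add_nonpos (hK u hu) (hKperp _ hxu)
  ext x
  exact le_antisymm (hnonpos x) (by simpa using hnonpos (-x))

theorem apply_nonpos_of_isLocalMinOn_peakSelection {E : X → ℝ} {D : X →L[ℝ] ℝ}
    {L : Submodule ℝ X} {p : X → X} {S : Set X} {x₀ : X} (hx₀ : x₀ ∈ Lᗮ) (hx₀1 : ‖x₀‖ = 1)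
    (hS : S ∈ 𝓝[(Lᗮ : Set X) ∩ sphere 0 1] x₀) (hpS : ∀ v ∈ S, p v ∈ halfSpace L v)
    (hpcont : ContinuousWithinAt p S x₀) (hpos : 0 < ⟪p x₀, x₀⟫)
    (hmax : IsLocalMaxOn E (halfSpace L x₀) (p x₀))
    (hmin : IsLocalMinOn (fun v => E (p v)) S x₀) (hD : HasStrictFDerivAt E D (p x₀))
    {w : X} (hw : w ∈ Lᗮ) : D w ≤ 0 := by
  by_contra! hDw
  set n : ℝ → ℝ := fun s => ‖x₀ + s • w‖
  set γ : ℝ → X := fun s => (n s)⁻¹ • (x₀ + s • w)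
  set κ : ℝ → ℝ := fun s => ⟪p (γ s), γ s⟫ / n s
  set b : ℝ → X := fun s => p (γ s) - (κ s * s) • w
  have hγ₀ := tendsto_inv_norm_smul_add_smul_nhdsWithin hx₀ hx₀1 hw
  have hγ : Tendsto γ (𝓝 0) (𝓝[S] x₀) :=
    tendsto_nhdsWithin_iff.2 ⟨hγ₀.mono_right nhdsWithin_le_nhds, hγ₀.eventually_mem hS⟩
  have hpγ : Tendsto (fun s => p (γ s)) (𝓝 0) (𝓝 (p x₀)) := hpcont.tendsto.comp hγ
  have hκ : Tendsto κ (𝓝 0) (𝓝 ⟪p x₀, x₀⟫) := by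
    have hn : Tendsto n (𝓝 0) (𝓝 1) :=
      (by fun_prop : Continuous n).tendsto' 0 1 (by simp [n, hx₀1])
    have := (hpγ.inner (hγ₀.mono_right nhdsWithin_le_nhds)).div hn one_ne_zero
    rwa [div_one] at this
  have hσ : Tendsto (fun s => κ s * s) (𝓝[<] 0) (𝓝[<] 0) := by
    refine tendsto_nhdsWithin_iff.2 ⟨?_, ?_⟩
    · simpa using (hκ.mono_left nhdsWithin_le_nhds).mul
        (tendsto_id.mono_left nhdsWithin_le_nhds : Tendsto id (𝓝[<] (0 : ℝ)) (𝓝 0))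
    · filter_upwards [hκ.mono_left nhdsWithin_le_nhds |>.eventually (lt_mem_nhds hpos),
        self_mem_nhdsWithin] with s hκs hs
      exact mul_neg_of_pos_of_neg hκs hs
  have hb : Tendsto b (𝓝 0) (𝓝 (p x₀)) := by
    simpa using hpγ.sub ((hκ.mul tendsto_id).smul_const w)
  have hbmem : ∀ᶠ s in 𝓝 0, b s ∈ halfSpace L x₀ := by
    filter_upwards [hγ.eventually self_mem_nhdsWithin, hγ₀.eventually self_mem_nhdsWithin]
      with s hγS hsphere
    obtain ⟨hu, ht⟩ := (mem_halfSpace_iff hsphere.1 (mem_sphere_zero_iff_norm.1 hsphere.2)).1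
      (hpS _ hγS)
    refine ⟨_, hu, κ s, div_nonneg ht (norm_nonneg _), ?_⟩
    simp only [b, κ, γ]
    module
  have hmin_ev : ∀ᶠ s in 𝓝[<] 0, E (p x₀) ≤ E (p (γ s)) :=
    (hγ.mono_left nhdsWithin_le_nhds).eventually hmin
  have hmax_ev : ∀ᶠ s in 𝓝[<] 0, E (b s) ≤ E (p x₀) :=
    ((tendsto_nhdsWithin_iff.2 ⟨hb, hbmem⟩).mono_left nhdsWithin_le_nhds).eventually hmax
  have hdesc_ev : ∀ᶠ s in 𝓝[<] 0, E (b s + (κ s * s) • w) < E (b s) :=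
    ((hb.mono_left nhdsWithin_le_nhds).prodMk hσ).eventually (hD.eventually_add_smul_lt hDw)
  obtain ⟨s, hmin_s, hmax_s, hdesc_s⟩ := (hmin_ev.and (hmax_ev.and hdesc_ev)).exists
  rw [sub_add_cancel] at hdesc_s
  linarith

end InnerProductSpace

/-- **Li–Zhou, Theorem 2.1**: a local minimum point of `E ∘ p` along a continuous local
peak selection `p`, staying away from `L`, yields a critical point of `E`. -/
theorem critical_point_of_local_peak_selection
    {X : Type*} [NormedAddCommGroup X] [InnerProductSpace ℝ X] [CompleteSpace X]
    (E : X → ℝ) (E' : X → X →L[ℝ] ℝ)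
    (hE : ∀ x, HasFDerivAt E (E' x) x) (hE' : Continuous E')
    (L : Submodule ℝ X) (hL : IsClosed (L : Set X))
    (x₀ : X) (hx₀mem : x₀ ∈ Lᗮ) (hx₀norm : ‖x₀‖ = 1)
    (δ : ℝ) (hδ : 0 < δ)
    (p : X → X)
    (hp : ∀ v, v ∈ Lᗮ → ‖v‖ = 1 → ‖v - x₀‖ < δ → IsLocalMaxIn E L v (p v))
    (hpcont : ContinuousWithinAt p {v : X | v ∈ Lᗮ ∧ ‖v‖ = 1 ∧ ‖v - x₀‖ < δ} x₀)
    (α : ℝ) (hα : 0 < α) (hdist : ∀ u ∈ L, α ≤ ‖p x₀ - u‖)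
    (hmin : IsLocalMinOn (fun v => E (p v))
      {v : X | v ∈ Lᗮ ∧ ‖v‖ = 1 ∧ ‖v - x₀‖ < δ} x₀) :
    E' (p x₀) = 0 := by
  have hS : {v : X | v ∈ Lᗮ ∧ ‖v‖ = 1 ∧ ‖v - x₀‖ < δ} ∈
      𝓝[(Lᗮ : Set X) ∩ sphere 0 1] x₀ := by
    filter_upwards [self_mem_nhdsWithin, mem_nhdsWithin_of_mem_nhds (ball_mem_nhds x₀ hδ)]
      with v ⟨hv, hv1⟩ hvx
    exact ⟨hv, mem_sphere_zero_iff_norm.1 hv1, mem_ball_iff_norm.1 hvx⟩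
  have hpeak := hp x₀ hx₀mem hx₀norm (by simpa using hδ)
  have hpos : 0 < ⟪p x₀, x₀⟫ := by
    obtain ⟨hu, ht⟩ := (mem_halfSpace_iff hx₀mem hx₀norm).1 hpeak.1
    have := hdist _ hu
    rw [sub_sub_cancel, norm_smul, hx₀norm, mul_one, Real.norm_of_nonneg ht] at this
    linarith
  have : CompleteSpace L := hL.completeSpace_coe
  have hD : HasStrictFDerivAt E (E' (p x₀)) (p x₀) :=
    hasStrictFDerivAt_of_hasFDerivAt_of_continuousAt (.of_forall hE) hE'.continuousAt
  refine ContinuousLinearMap.eq_zero_of_nonpos_of_nonpos_orthogonal (K := L)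
    (fun u hu => hpeak.isLocalMaxOn.hasFDerivWithinAt_nonpos (hE _).hasFDerivWithinAt
      (mem_posTangentConeAt_halfSpace hpeak.1 hu))
    (fun w hw => apply_nonpos_of_isLocalMinOn_peakSelection hx₀mem hx₀norm hS
      (fun v hv => (hp v hv.1 hv.2.1 hv.2.2).1) hpcont hpos hpeak.isLocalMaxOn hmin hD hw)
end

section
/- Let {X_N}_{N≥0} be a sequence of closed subspaces of X with X_0 ⊆ X_1 ⊆ ⋯ whose union is dense in X, i.e. X equals the closure of ⋃_{N≥0} X_N. Let σ : ℕ → (0,∞) satisfy σ(N) → 0 as N → ∞, and let {g_N}_{N≥0} ⊂ X* be a sequence such that sup{g_N(v) : v ∈ X_N, ‖v‖ = 1} ≤ σ(N) for all N, and such that for every infinite subset J ⊆ ℕ the sequence {g_N}_{N∈J} has a subsequence converging in X*. Then ‖g_N‖_{X*} → 0 as N → ∞. -/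
open Filter

/-- If the functionals `g_N ∈ X*` have discrete dual norms on a dense nested family of
subspaces bounded by `σ(N) → 0`, and every infinite subfamily has a convergent subsequence
in `X*`, then `‖g_N‖_{X*} → 0`. -/
theorem dual_norm_tendsto_zero_of_discrete_control
    {X : Type*} [NormedAddCommGroup X] [InnerProductSpace ℝ X] [CompleteSpace X]
    (XN : ℕ → Submodule ℝ X)
    (hclosed : ∀ N, IsClosed ((XN N : Set X)))
    (hmono : ∀ N, XN N ≤ XN (N + 1))
    (hdense : Dense (⋃ N, (XN N : Set X)))
    (σ : ℕ → ℝ) (hσpos : ∀ N, 0 < σ N)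
    (hσ : Tendsto σ atTop (nhds 0))
    (g : ℕ → X →L[ℝ] ℝ)
    (hg : ∀ N, ∀ v ∈ XN N, ‖v‖ = 1 → g N v ≤ σ N)
    (hsub : ∀ J : Set ℕ, J.Infinite →
      ∃ φ : ℕ → ℕ, StrictMono φ ∧ (∀ n, φ n ∈ J) ∧
        ∃ glim : X →L[ℝ] ℝ, Tendsto (fun n => g (φ n)) atTop (nhds glim)) :
    Tendsto (fun N => ‖g N‖) atTop (nhds 0) := by
  have hmono' : Monotone XN := monotone_nat_of_le_succ hmono
  -- absolute value bound
  have habs : ∀ N, ∀ v ∈ XN N, ‖v‖ = 1 → |g N v| ≤ σ N := by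
    intro N v hv hnv
    rw [abs_le]
    constructor
    · have := hg N (-v) (neg_mem hv) (by rw [norm_neg]; exact hnv)
      rw [map_neg] at this
      linarith
    · exact hg N v hv hnv
  by_contra hcon
  rw [Metric.tendsto_atTop] at hcon
  push_neg at hcon
  obtain ⟨ε, hε, hfreq⟩ := hcon
  set J : Set ℕ := {N | ε ≤ dist ‖g N‖ 0} with hJ
  have hJinf : J.Infinite := by
    apply Set.infinite_of_not_bddAbove
    rintro ⟨b, hb⟩
    obtain ⟨n, hn, hn'⟩ := hfreq (b + 1)
    have : n ≤ b := hb hn'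
    omega
  obtain ⟨φ, hφ, hφJ, glim, hglim⟩ := hsub J hJinf
  -- glim vanishes on every XN M
  have hzero : ∀ M, ∀ v ∈ XN M, glim v = 0 := by
    intro M v hv
    rcases eq_or_ne v 0 with rfl | hv0
    · simp
    · set u : X := ‖v‖⁻¹ • v with hu
      have hnu : ‖u‖ = 1 := by
        rw [hu, norm_smul, norm_inv, norm_norm]
        exact inv_mul_cancel₀ (norm_ne_zero_iff.mpr hv0)
      have hum : u ∈ XN M := Submodule.smul_mem _ _ hv
      have hpt : Tendsto (fun n => g (φ n) u) atTop (nhds (glim u)) :=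
        ((ContinuousLinearMap.apply ℝ ℝ u).continuous.tendsto glim).comp hglim
      have hpta : Tendsto (fun n => |g (φ n) u|) atTop (nhds |glim u|) :=
        hpt.abs
      have hσφ : Tendsto (fun n => σ (φ n)) atTop (nhds 0) :=
        hσ.comp hφ.tendsto_atTop
      have hle : |glim u| ≤ 0 := by
        refine le_of_tendsto_of_tendsto hpta hσφ ?_
        filter_upwards [eventually_ge_atTop M] with n hn
        exact habs (φ n) u (hmono' (le_trans hn hφ.le_apply) hum) hnu
      have hgu : glim u = 0 := by
        have := abs_nonneg (glim u)
        have : |glim u| = 0 := le_antisymm hle (abs_nonneg _)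
        exact abs_eq_zero.mp this
      have : glim v = ‖v‖ * glim u := by
        rw [hu, map_smul, smul_eq_mul, ← mul_assoc,
          mul_inv_cancel₀ (norm_ne_zero_iff.mpr hv0), one_mul]
      rw [this, hgu, mul_zero]
  -- glim = 0
  have hglim0 : glim = 0 := by
    ext x
    have hclosedset : IsClosed {x : X | glim x = 0} :=
      isClosed_eq glim.continuous continuous_const
    have hsubset : (⋃ N, (XN N : Set X)) ⊆ {x : X | glim x = 0} := by
      rintro y hy
      obtain ⟨s, ⟨M, rfl⟩, hyM⟩ := hy
      exact hzero M y hyM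
    have : (Set.univ : Set X) ⊆ {x : X | glim x = 0} := by
      rw [← hdense.closure_eq]
      exact hclosedset.closure_subset_iff.mpr hsubset
    exact this (Set.mem_univ x)
  -- contradiction
  have hnorm : Tendsto (fun n => ‖g (φ n)‖) atTop (nhds ‖glim‖) :=
    hglim.norm
  have hεle : ε ≤ ‖glim‖ := by
    refine le_of_tendsto_of_tendsto' tendsto_const_nhds hnorm ?_
    intro n
    have := hφJ n
    rw [hJ, Set.mem_setOf_eq, Real.dist_eq, sub_zero, abs_of_nonneg (norm_nonneg _)] at this
    exact this
  rw [hglim0, norm_zero] at hεle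
  linarith
end

section
/- Suppose E satisfies the Palais–Smale condition, and let {X_N}_{N≥0} be a sequence of closed subspaces of X with X_0 ⊆ X_1 ⊆ ⋯ whose union is dense in X. Let σ : ℕ → (0,∞) satisfy σ(N) → 0 as N → ∞, and for each N let w_N ∈ X_N satisfy ‖R_N(w_N)‖ ≤ σ(N). Assume that {E(w_N)} is bounded in ℝ and that for every infinite subset J ⊆ ℕ the sequence {E'(w_N)}_{N∈J} has a subsequence converging in X*. Then inf_{y∈C_E} ‖w_N − y‖ → 0 as N → ∞, where C_E = {w ∈ X : E'(w) = 0} is the set of critical points of E. -/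
open Filter Topology Metric
open scoped RealInnerProductSpace

/-!
Testing the Galerkin equations against a fixed `v ∈ X_M` bounds `|E'(w_N) v|` by `σ(N) ‖v‖` for
all `N ≥ M`, so `E'(w_N) → 0` pointwise on the dense set `⋃ X_M`. Any norm limit of a subsequence
of `E'(w_N)` therefore vanishes on a dense set, hence is `0`; with the compactness hypothesis this
gives `E'(w_N) → 0` in `X*`. Now `(w_N)` is a Palais–Smale sequence, so every subsequence has a
further subsequence converging to some `x`, and `E'(x) = 0` by continuity of `E'`.
-/

def PalaisSmale {X Y : Type*} [TopologicalSpace X] [Norm Y] (E : X → ℝ) (E' : X → Y) : Prop :=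
  ∀ u : ℕ → X, (∃ M : ℝ, ∀ k, |E (u k)| ≤ M) →
    Tendsto (fun k => ‖E' (u k)‖) atTop (𝓝 0) →
    ∃ φ : ℕ → ℕ, StrictMono φ ∧ ∃ x : X, Tendsto (u ∘ φ) atTop (𝓝 x)

theorem tendsto_of_forall_infinite_exists_subseq {α : Type*} [TopologicalSpace α]
    {f : ℕ → α} {a : α}
    (h : ∀ J : Set ℕ, J.Infinite →
      ∃ φ : ℕ → ℕ, (∀ n, φ n ∈ J) ∧ Tendsto (f ∘ φ) atTop (𝓝 a)) :
    Tendsto f atTop (𝓝 a) := by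
  refine tendsto_of_subseq_tendsto fun ns hns => ?_
  have hJ : (Set.range ns).Infinite :=
    Set.infinite_of_not_bddAbove (not_bddAbove_of_tendsto_atTop hns)
  obtain ⟨φ, hφJ, hφ⟩ := h _ hJ
  choose ms hms using hφJ
  refine ⟨ms, ?_⟩
  simpa only [hms, Function.comp_def] using hφ

theorem ContinuousLinearMap.eq_zero_of_tendsto_of_tendsto_apply_dense
    {𝕜 E F : Type*} [NontriviallyNormedField 𝕜] [NormedAddCommGroup E] [NormedSpace 𝕜 E]
    [NormedAddCommGroup F] [NormedSpace 𝕜 F] {ι : Type*} {l : Filter ι} [l.NeBot]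
    {f : ι → E →L[𝕜] F} {g : E →L[𝕜] F} {D : Set E} (hD : Dense D)
    (hf : Tendsto f l (𝓝 g)) (hfD : ∀ v ∈ D, Tendsto (fun n => f n v) l (𝓝 0)) :
    g = 0 := by
  refine DFunLike.coe_injective (Continuous.ext_on hD g.continuous continuous_const fun v hv => ?_)
  exact tendsto_nhds_unique (((ContinuousLinearMap.apply 𝕜 F v).continuous.tendsto g).comp hf)
    (hfD v hv)

theorem abs_apply_le_of_inner_eq_on {X : Type*} [NormedAddCommGroup X] [InnerProductSpace ℝ X]
    {f : X →L[ℝ] ℝ} {r : X} {K : Submodule ℝ X} (hr : ∀ v ∈ K, ⟪r, v⟫ = f v)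
    {v : X} (hv : v ∈ K) :
    |f v| ≤ ‖r‖ * ‖v‖ := by
  rw [← hr v hv]
  exact abs_real_inner_le_norm r v

theorem tendsto_apply_zero_of_inner_eq_on_monotone {X : Type*} [NormedAddCommGroup X]
    [InnerProductSpace ℝ X] {K : ℕ → Submodule ℝ X} (hK : Monotone K)
    {f : ℕ → X →L[ℝ] ℝ} {r : ℕ → X} (hr : ∀ N, ∀ v ∈ K N, ⟪r N, v⟫ = f N v)
    (hr0 : Tendsto (fun N => ‖r N‖) atTop (𝓝 0)) {v : X} (hv : v ∈ ⋃ N, (K N : Set X)) :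
    Tendsto (fun N => f N v) atTop (𝓝 0) := by
  obtain ⟨M, hvM⟩ := Set.mem_iUnion.mp hv
  refine squeeze_zero_norm' ?_ (by simpa using hr0.mul_const ‖v‖)
  filter_upwards [eventually_ge_atTop M] with N hN
  exact abs_apply_le_of_inner_eq_on (hr N) (hK hN hvM)

theorem tendsto_infDist_zero_set_of_palaisSmale {X Y : Type*} [PseudoMetricSpace X]
    [NormedAddCommGroup Y] {E : X → ℝ} {E' : X → Y} (hPS : PalaisSmale E E')
    (hE' : Continuous E') {u : ℕ → X} (hEu : ∃ M : ℝ, ∀ k, |E (u k)| ≤ M)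
    (hE'u : Tendsto (fun k => E' (u k)) atTop (𝓝 0)) :
    Tendsto (fun k => infDist (u k) {y | E' y = 0}) atTop (𝓝 0) := by
  refine tendsto_of_subseq_tendsto fun ns hns => ?_
  obtain ⟨M, hM⟩ := hEu
  obtain ⟨φ, hφ, x, hx⟩ := hPS (u ∘ ns) ⟨M, fun k => hM (ns k)⟩
    (tendsto_zero_iff_norm_tendsto_zero.mp (hE'u.comp hns))
  have hxcrit : E' x = 0 :=
    tendsto_nhds_unique ((hE'.tendsto x).comp hx) (hE'u.comp (hns.comp hφ.tendsto_atTop))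
  refine ⟨φ, squeeze_zero (fun _ => infDist_nonneg) (fun _ => infDist_le_dist_of_mem hxcrit) ?_⟩
  exact tendsto_iff_dist_tendsto_zero.mp hx

theorem lmmg_convergence_adaptive_enrichment_general
    {X : Type*} [NormedAddCommGroup X] [InnerProductSpace ℝ X]
    (E : X → ℝ) (E' : X → X →L[ℝ] ℝ)
    (hE' : Continuous E')
    (PS : ∀ u : ℕ → X, (∃ M : ℝ, ∀ k, |E (u k)| ≤ M) →
      Tendsto (fun k => ‖E' (u k)‖) atTop (nhds 0) →
      ∃ φ : ℕ → ℕ, StrictMono φ ∧ ∃ x : X, Tendsto (u ∘ φ) atTop (nhds x))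
    (XN : ℕ → Submodule ℝ X)
    (hmono : ∀ N, XN N ≤ XN (N + 1))
    (hdense : Dense (⋃ N, (XN N : Set X)))
    (σ : ℕ → ℝ)
    (hσ : Tendsto σ atTop (nhds 0))
    (w : ℕ → X)
    (R : ℕ → X → X)
    (hR : ∀ N, ∀ x : X, ∀ v ∈ XN N, ⟪R N x, v⟫ = E' x v)
    (hres : ∀ N, ‖R N (w N)‖ ≤ σ N)
    (hEbdd : ∃ M : ℝ, ∀ N, |E (w N)| ≤ M)
    (hsub : ∀ J : Set ℕ, J.Infinite →
      ∃ φ : ℕ → ℕ, StrictMono φ ∧ (∀ n, φ n ∈ J) ∧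
        ∃ glim : X →L[ℝ] ℝ, Tendsto (fun n => E' (w (φ n))) atTop (nhds glim)) :
    Tendsto (fun N => Metric.infDist (w N) {y : X | E' y = 0}) atTop (nhds 0) := by
  have hpointwise : ∀ v ∈ ⋃ N, (XN N : Set X), Tendsto (fun N => E' (w N) v) atTop (𝓝 0) :=
    fun v => tendsto_apply_zero_of_inner_eq_on_monotone (monotone_nat_of_le_succ hmono)
      (fun N => hR N (w N)) (squeeze_zero (fun _ => norm_nonneg _) hres hσ)
  have hdual : Tendsto (fun N => E' (w N)) atTop (𝓝 0) := by
    refine tendsto_of_forall_infinite_exists_subseq fun J hJ => ?_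
    obtain ⟨φ, hφ, hφJ, glim, hglim⟩ := hsub J hJ
    have hglim0 : glim = 0 :=
      ContinuousLinearMap.eq_zero_of_tendsto_of_tendsto_apply_dense hdense hglim
        fun v hv => (hpointwise v hv).comp hφ.tendsto_atTop
    exact ⟨φ, hφJ, hglim0 ▸ hglim⟩
  exact tendsto_infDist_zero_set_of_palaisSmale PS hE' hEbdd hdual

/-- **Theorem (II) of the LMMG convergence analysis**: if the final approximations `w_N` on a
dense nested family of closed subspaces have discrete residuals bounded by `σ(N) → 0`, the
energies `E(w_N)` are bounded, and every infinite subfamily of `{E'(w_N)}` has a convergent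
subsequence in `X*`, then `w_N` converges to the set of critical points of `E`. -/
theorem lmmg_convergence_adaptive_enrichment
    {X : Type*} [NormedAddCommGroup X] [InnerProductSpace ℝ X] [CompleteSpace X]
    (E : X → ℝ) (E' : X → X →L[ℝ] ℝ)
    (hE : ∀ x, HasFDerivAt E (E' x) x) (hE' : Continuous E')
    (PS : ∀ u : ℕ → X, (∃ M : ℝ, ∀ k, |E (u k)| ≤ M) →
      Tendsto (fun k => ‖E' (u k)‖) atTop (nhds 0) →
      ∃ φ : ℕ → ℕ, StrictMono φ ∧ ∃ x : X, Tendsto (u ∘ φ) atTop (nhds x))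
    (XN : ℕ → Submodule ℝ X)
    (hclosed : ∀ N, IsClosed ((XN N : Set X)))
    (hmono : ∀ N, XN N ≤ XN (N + 1))
    (hdense : Dense (⋃ N, (XN N : Set X)))
    (σ : ℕ → ℝ) (hσpos : ∀ N, 0 < σ N)
    (hσ : Tendsto σ atTop (nhds 0))
    (w : ℕ → X) (hwmem : ∀ N, w N ∈ XN N)
    (R : ℕ → X → X)
    (hRmem : ∀ N, ∀ x : X, R N x ∈ XN N)
    (hR : ∀ N, ∀ x : X, ∀ v ∈ XN N, ⟪R N x, v⟫ = E' x v)
    (hres : ∀ N, ‖R N (w N)‖ ≤ σ N)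
    (hEbdd : ∃ M : ℝ, ∀ N, |E (w N)| ≤ M)
    (hsub : ∀ J : Set ℕ, J.Infinite →
      ∃ φ : ℕ → ℕ, StrictMono φ ∧ (∀ n, φ n ∈ J) ∧
        ∃ glim : X →L[ℝ] ℝ, Tendsto (fun n => E' (w (φ n))) atTop (nhds glim)) :
    Tendsto (fun N => Metric.infDist (w N) {y : X | E' y = 0}) atTop (nhds 0) :=
  lmmg_convergence_adaptive_enrichment_general E E' hE' PS XN hmono hdense σ hσ w R hR hres hEbdd
    hsub
end

section
/- Let f : ℝ → ℝ be continuous and define F(t) = ∫₀^t f(s) ds. Suppose there exist constants μ > 2 and r > 0 such that 0 < μ F(t) ≤ t f(t) for all t ∈ ℝ with |t| ≥ r. Then there exist constants a₃ > 0 and a₄ ≥ 0 such that F(t) ≥ a₃ |t|^μ − a₄ for every t ∈ ℝ. -/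
/-- **Superquadratic growth of the primitive** (consequence of condition (f4)):
if `0 < μ F(t) ≤ t f(t)` for `|t| ≥ r` with `μ > 2`, then `F(t) ≥ a₃ |t|^μ − a₄`. -/
theorem primitive_superquadratic_growth
    (f : ℝ → ℝ) (hf : Continuous f)
    (F : ℝ → ℝ) (hF : ∀ t : ℝ, F t = ∫ s in (0 : ℝ)..t, f s)
    (μ r : ℝ) (hμ : 2 < μ) (hr : 0 < r)
    (hcond : ∀ t : ℝ, r ≤ |t| → 0 < μ * F t ∧ μ * F t ≤ t * f t) :
    ∃ a₃ : ℝ, 0 < a₃ ∧ ∃ a₄ : ℝ, 0 ≤ a₄ ∧ ∀ t : ℝ, a₃ * |t| ^ μ - a₄ ≤ F t := by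
  have hμ0 : (0:ℝ) < μ := by linarith
  have hFeq : F = fun t => ∫ s in (0:ℝ)..t, f s := funext hF
  have hFd : ∀ t, HasDerivAt F (f t) t := by
    intro t; rw [hFeq]; exact (hf.integral_hasStrictDerivAt 0 t).hasDerivAt
  have hFc : Continuous F :=
    continuous_iff_continuousAt.2 fun t => (hFd t).continuousAt
  have hFpos : ∀ t, r ≤ |t| → 0 < F t := by
    intro t ht
    have h := (hcond t ht).1
    by_contra hle
    push_neg at hle
    nlinarith
  -- positive side
  have hpos_bound : ∀ t, r ≤ t → F r / r ^ μ * t ^ μ ≤ F t := by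
    have hHderiv : ∀ s, r ≤ s →
        HasDerivAt (fun u => Real.log (F u) - μ * Real.log u)
          (f s / F s - μ * s⁻¹) s := by
      intro s hs
      have hs0 : 0 < s := lt_of_lt_of_le hr hs
      have hFs : 0 < F s := hFpos s (by rwa [abs_of_pos hs0])
      exact ((hFd s).log hFs.ne').sub ((Real.hasDerivAt_log hs0.ne').const_mul μ)
    have hHmono : MonotoneOn (fun u => Real.log (F u) - μ * Real.log u) (Set.Ici r) := by
      apply monotoneOn_of_deriv_nonneg (convex_Ici r)
      · exact fun s hs => (hHderiv s hs).continuousAt.continuousWithinAt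
      · intro s hs
        rw [interior_Ici, Set.mem_Ioi] at hs
        exact (hHderiv s hs.le).differentiableAt.differentiableWithinAt
      · intro s hs
        rw [interior_Ici, Set.mem_Ioi] at hs
        have hs0 : 0 < s := hr.trans hs
        have hFs : 0 < F s := hFpos s (by rw [abs_of_pos hs0]; exact hs.le)
        have h2 := (hcond s (by rw [abs_of_pos hs0]; exact hs.le)).2
        rw [(hHderiv s hs.le).deriv]
        have heq : f s / F s - μ * s⁻¹ = (s * f s - μ * F s) / (s * F s) := by
          field_simp [hs0.ne', hFs.ne']
        rw [heq]
        exact div_nonneg (by linarith) (by positivity)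
    intro t ht
    have ht0 : 0 < t := hr.trans_le ht
    have hFt : 0 < F t := hFpos t (by rwa [abs_of_pos ht0])
    have hFr : 0 < F r := hFpos r (by rw [abs_of_pos hr])
    have hH := hHmono (Set.self_mem_Ici) ht ht
    have hrpow : (0:ℝ) < r ^ μ := Real.rpow_pos_of_pos hr μ
    have htpow : (0:ℝ) < t ^ μ := Real.rpow_pos_of_pos ht0 μ
    have hX : 0 < F r / r ^ μ * t ^ μ := by positivity
    refine (Real.log_le_log_iff hX hFt).1 ?_
    rw [Real.log_mul (by positivity) htpow.ne', Real.log_div hFr.ne' hrpow.ne',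
      Real.log_rpow ht0, Real.log_rpow hr]
    have hH' : Real.log (F r) - μ * Real.log r ≤ Real.log (F t) - μ * Real.log t := hH
    linarith
  -- negative side
  have hneg_bound : ∀ t, t ≤ -r → F (-r) / r ^ μ * (-t) ^ μ ≤ F t := by
    have habs : ∀ s : ℝ, s ≤ -r → r ≤ |s| := by
      intro s hs; rw [abs_of_neg (by linarith)]; linarith
    have hKderiv : ∀ s, s ≤ -r →
        HasDerivAt (fun u => Real.log (F u) - μ * Real.log (-u))
          (f s / F s - μ * (-1 / -s)) s := by
      intro s hs
      have hs0 : s < 0 := by linarith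
      have hFs : 0 < F s := hFpos s (habs s hs)
      have hneg : HasDerivAt (fun u : ℝ => -u) (-1) s := (hasDerivAt_id s).neg
      exact ((hFd s).log hFs.ne').sub ((hneg.log (by simpa using hs0.ne)).const_mul μ)
    have hKanti : AntitoneOn (fun u => Real.log (F u) - μ * Real.log (-u)) (Set.Iic (-r)) := by
      apply antitoneOn_of_deriv_nonpos (convex_Iic (-r))
      · exact fun s hs => (hKderiv s hs).continuousAt.continuousWithinAt
      · intro s hs
        rw [interior_Iic, Set.mem_Iio] at hs
        exact (hKderiv s hs.le).differentiableAt.differentiableWithinAt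
      · intro s hs
        rw [interior_Iic, Set.mem_Iio] at hs
        have hs0 : s < 0 := by linarith
        have hFs : 0 < F s := hFpos s (habs s hs.le)
        have h2 := (hcond s (habs s hs.le)).2
        rw [(hKderiv s hs.le).deriv]
        have heq : f s / F s - μ * (-1 / -s) = (s * f s - μ * F s) / (s * F s) := by
          rw [neg_div_neg_eq, one_div]
          field_simp [hs0.ne, hFs.ne']
        rw [heq]
        exact div_nonpos_of_nonneg_of_nonpos (by linarith)
          (mul_nonpos_of_nonpos_of_nonneg hs0.le hFs.le)
    intro t ht
    have ht0 : t < 0 := by linarith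
    have hFt : 0 < F t := hFpos t (habs t ht)
    have hFr : 0 < F (-r) := hFpos (-r) (habs (-r) le_rfl)
    have hK := hKanti (Set.mem_Iic.2 ht) (Set.self_mem_Iic) ht
    have hrpow : (0:ℝ) < r ^ μ := Real.rpow_pos_of_pos hr μ
    have htpow : (0:ℝ) < (-t) ^ μ := Real.rpow_pos_of_pos (by linarith) μ
    have hX : 0 < F (-r) / r ^ μ * (-t) ^ μ := by positivity
    refine (Real.log_le_log_iff hX hFt).1 ?_
    rw [Real.log_mul (by positivity) htpow.ne', Real.log_div hFr.ne' hrpow.ne',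
      Real.log_rpow (by linarith : (0:ℝ) < -t), Real.log_rpow hr]
    have hK' : Real.log (F (-r)) - μ * Real.log (- -r) ≤ Real.log (F t) - μ * Real.log (-t) := hK
    rw [neg_neg] at hK'
    linarith
  -- assemble constants
  have hFr : 0 < F r := hFpos r (by rw [abs_of_pos hr])
  have hFnr : 0 < F (-r) := hFpos (-r) (by rw [abs_neg, abs_of_pos hr])
  have hrpow : (0:ℝ) < r ^ μ := Real.rpow_pos_of_pos hr μ
  set a₃ : ℝ := min (F r / r ^ μ) (F (-r) / r ^ μ) with ha₃def
  have ha₃ : 0 < a₃ := lt_min (by positivity) (by positivity)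
  obtain ⟨x₀, hx₀, hmin⟩ := isCompact_Icc.exists_isMinOn
    (Set.nonempty_Icc.2 (by linarith : -r ≤ r)) hFc.continuousOn
  set a₄ : ℝ := max (a₃ * r ^ μ - F x₀) 0 with ha₄def
  refine ⟨a₃, ha₃, a₄, le_max_right _ _, fun t => ?_⟩
  rcases le_or_gt r |t| with hcase | hcase
  · -- |t| ≥ r
    have hbig : a₃ * |t| ^ μ ≤ F t := by
      rcases le_abs.1 hcase with h | h
      · have := hpos_bound t h
        have habs : |t| = t := abs_of_pos (hr.trans_le h)
        rw [habs]
        calc a₃ * t ^ μ ≤ F r / r ^ μ * t ^ μ := by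
              apply mul_le_mul_of_nonneg_right (min_le_left _ _)
                (Real.rpow_nonneg (by linarith) μ)
          _ ≤ F t := this
      · have h' : t ≤ -r := by linarith
        have := hneg_bound t h'
        have habs : |t| = -t := abs_of_neg (by linarith)
        rw [habs]
        calc a₃ * (-t) ^ μ ≤ F (-r) / r ^ μ * (-t) ^ μ := by
              apply mul_le_mul_of_nonneg_right (min_le_right _ _)
                (Real.rpow_nonneg (by linarith) μ)
          _ ≤ F t := this
    have : (0:ℝ) ≤ a₄ := le_max_right _ _
    linarith
  · -- |t| ≤ r
    have htmem : t ∈ Set.Icc (-r) r := by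
      constructor <;> [linarith [neg_abs_le t]; linarith [le_abs_self t]]
    have hFge : F x₀ ≤ F t := hmin htmem
    have hpow : |t| ^ μ ≤ r ^ μ :=
      Real.rpow_le_rpow (abs_nonneg t) hcase.le hμ0.le
    have h4 : a₃ * r ^ μ - F x₀ ≤ a₄ := le_max_left _ _
    nlinarith [mul_le_mul_of_nonneg_left hpow ha₃.le]
end

section
/- Let (Ω, 𝒜, μ) be a measure space, let v : Ω → ℝ be measurable with μ({x ∈ Ω : v(x) ≠ 0}) > 0, and let f : Ω × ℝ → ℝ be such that for each x ∈ Ω the function h_x : ℝ → ℝ defined by h_x(0) = 0 and h_x(t) = f(x,t)/|t| for t ≠ 0 is strictly increasing, and such that for every t > 0 the function x ↦ f(x, t v(x)) v(x) is μ-integrable. Then the function φ(t) = (1/t) ∫_Ω f(x, t v(x)) v(x) dμ(x) is strictly increasing on (0, ∞); in particular, for any a ∈ ℝ there is at most one t > 0 satisfying t · a = ∫_Ω f(x, t v(x)) v(x) dμ(x). -/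
open MeasureTheory

/-- **Uniqueness of the fibre critical point** (consequence of condition (f5)): if for each
`x` the map `t ↦ f(x,t)/|t|` (with value `0` at `t = 0`) is strictly increasing, then
`φ(t) = t⁻¹ ∫ f(x, t v(x)) v(x) dμ` is strictly increasing on `(0, ∞)`; in particular, for
any `a` there is at most one `t > 0` with `t a = ∫ f(x, t v(x)) v(x) dμ`. -/
theorem fibre_map_strict_monotone
    {Ω : Type*} [MeasurableSpace Ω] (μ : Measure Ω)
    (v : Ω → ℝ) (hv : Measurable v)
    (hvne : 0 < μ {x : Ω | v x ≠ 0})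
    (f : Ω → ℝ → ℝ)
    (hmono : ∀ x : Ω, StrictMono (fun t : ℝ => if t = 0 then 0 else f x t / |t|))
    (hint : ∀ t : ℝ, 0 < t → Integrable (fun x => f x (t * v x) * v x) μ) :
    StrictMonoOn (fun t : ℝ => t⁻¹ * ∫ x, f x (t * v x) * v x ∂μ) (Set.Ioi 0) ∧
    ∀ a : ℝ, ∀ t₁ ∈ Set.Ioi (0 : ℝ), ∀ t₂ ∈ Set.Ioi (0 : ℝ),
      t₁ * a = (∫ x, f x (t₁ * v x) * v x ∂μ) →
      t₂ * a = (∫ x, f x (t₂ * v x) * v x ∂μ) → t₁ = t₂ := by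
  have key : ∀ x : Ω, ∀ t₁ t₂ : ℝ, 0 < t₁ → t₁ < t₂ →
      t₁⁻¹ * (f x (t₁ * v x) * v x) ≤ t₂⁻¹ * (f x (t₂ * v x) * v x) ∧
      (v x ≠ 0 → t₁⁻¹ * (f x (t₁ * v x) * v x) < t₂⁻¹ * (f x (t₂ * v x) * v x)) := by
    intro x t₁ t₂ ht₁ h12
    have ht₂ : 0 < t₂ := ht₁.trans h12
    set h : ℝ → ℝ := fun t => if t = 0 then 0 else f x t / |t| with hh
    have hmx : StrictMono h := hmono x
    have hfs : ∀ s : ℝ, s ≠ 0 → f x s = h s * |s| := by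
      intro s hs
      have habs : |s| ≠ 0 := abs_ne_zero.2 hs
      simp only [hh, if_neg hs]
      field_simp
    rcases lt_trichotomy (v x) 0 with hv0 | hv0 | hv0
    · have e : ∀ t : ℝ, 0 < t → t⁻¹ * (f x (t * v x) * v x) = -(h (t * v x) * (v x) ^ 2) := by
        intro t ht
        have hne : t * v x ≠ 0 := mul_ne_zero ht.ne' hv0.ne
        rw [hfs _ hne, abs_mul, abs_of_pos ht, abs_of_neg hv0]
        field_simp
      have hlt : h (t₂ * v x) < h (t₁ * v x) := hmx (by nlinarith)
      have hsq : (0:ℝ) < (v x) ^ 2 := by nlinarith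
      rw [e t₁ ht₁, e t₂ ht₂]
      constructor
      · nlinarith
      · intro _; nlinarith
    · simp [hv0]
    · have e : ∀ t : ℝ, 0 < t → t⁻¹ * (f x (t * v x) * v x) = h (t * v x) * (v x) ^ 2 := by
        intro t ht
        have hne : t * v x ≠ 0 := mul_ne_zero ht.ne' hv0.ne'
        rw [hfs _ hne, abs_mul, abs_of_pos ht, abs_of_pos hv0]
        field_simp
      have hlt : h (t₁ * v x) < h (t₂ * v x) := hmx (by nlinarith)
      have hsq : (0:ℝ) < (v x) ^ 2 := by nlinarith
      rw [e t₁ ht₁, e t₂ ht₂]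
      constructor
      · nlinarith
      · intro _; nlinarith
  have hstrict : StrictMonoOn (fun t : ℝ => t⁻¹ * ∫ x, f x (t * v x) * v x ∂μ) (Set.Ioi 0) := by
    intro t₁ ht₁ t₂ ht₂ h12
    simp only [Set.mem_Ioi] at ht₁ ht₂
    have hi₁ : Integrable (fun x => t₁⁻¹ * (f x (t₁ * v x) * v x)) μ :=
      (hint t₁ ht₁).const_mul _
    have hi₂ : Integrable (fun x => t₂⁻¹ * (f x (t₂ * v x) * v x)) μ :=
      (hint t₂ ht₂).const_mul _
    have hdiff : Integrable
        (fun x => t₂⁻¹ * (f x (t₂ * v x) * v x) - t₁⁻¹ * (f x (t₁ * v x) * v x)) μ :=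
      hi₂.sub hi₁
    have hpos : 0 < ∫ x, (t₂⁻¹ * (f x (t₂ * v x) * v x) - t₁⁻¹ * (f x (t₁ * v x) * v x)) ∂μ := by
      rw [integral_pos_iff_support_of_nonneg_ae
        (Filter.Eventually.of_forall fun x => sub_nonneg.2 (key x t₁ t₂ ht₁ h12).1) hdiff]
      refine lt_of_lt_of_le hvne (measure_mono ?_)
      intro x hx
      exact sub_ne_zero.2 (ne_of_gt ((key x t₁ t₂ ht₁ h12).2 hx))
    rw [integral_sub hi₂ hi₁, integral_const_mul, integral_const_mul] at hpos
    simpa using sub_pos.mp hpos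
  refine ⟨hstrict, ?_⟩
  intro a t₁ ht₁ t₂ ht₂ he₁ he₂
  refine hstrict.injOn ht₁ ht₂ ?_
  simp only [Set.mem_Ioi] at ht₁ ht₂
  simp only [← he₁, ← he₂]
  field_simp
end
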